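/- Let ρ be a density matrix on ℂ²⊗ℂ² (a two-qubit state), and define its negativity N(ρ) as the sum over the eigenvalues λ of ρ^{T_A} of max(−λ, 0) (equivalently, the absolute value of the sum of all negative eigenvalues of ρ^{T_A}). Then N(ρ) = 1/2 if and only if ρ is maximally entangled, i.e. ρ = ψψᴴ for some maximally entangled unit vector ψ : Fin 2 × Fin 2 → ℂ. -/

import Mathlib

open Matrix Polynomial
open scoped ComplexOrder

noncomputable section

/-- Partial transpose on subsystem A of a bipartite matrix. -/
def ptA {m n : ℕ} (ρ : Matrix (Fin m × Fin n) (Fin m × Fin n) ℂ) :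
    Matrix (Fin m × Fin n) (Fin m × Fin n) ℂ :=
  fun p q => ρ (q.1, p.2) (p.1, q.2)

/-- A density matrix: positive semidefinite with trace one. -/
def IsDensityMatrix {k : Type*} [Fintype k] [DecidableEq k] (ρ : Matrix k k ℂ) : Prop :=
  ρ.PosSemidef ∧ ρ.trace = 1

open Classical in
/-- Minimal (real) eigenvalue of a Hermitian matrix (junk value 0 otherwise). -/
noncomputable def minEig {k : Type*} [Fintype k] [DecidableEq k] (A : Matrix k k ℂ) : ℝ :=
  if h : A.IsHermitian then ⨅ i, h.eigenvalues i else 0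

/-- The rank-one projection |ψ⟩⟨ψ| of a vector ψ. -/
def proj {k : Type*} [Fintype k] (ψ : k → ℂ) : Matrix k k ℂ :=
  Matrix.vecMulVec ψ (star ψ)

/-- A unit vector. -/
def IsUnitVec {k : Type*} [Fintype k] (ψ : k → ℂ) : Prop :=
  ∑ p, ‖ψ p‖ ^ 2 = 1

/-- Reduced matrix on subsystem A of a pure state ψ. -/
def reducedA {n : ℕ} (ψ : Fin n × Fin n → ℂ) : Matrix (Fin n) (Fin n) ℂ :=
  fun i k => ∑ j, ψ (i, j) * (starRingEnd ℂ) (ψ (k, j))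

/-- ψ is maximally entangled iff its reduced matrix is (1/n)·identity. -/
def MaxEntangled {n : ℕ} (ψ : Fin n × Fin n → ℂ) : Prop :=
  reducedA ψ = ((n : ℂ))⁻¹ • (1 : Matrix (Fin n) (Fin n) ℂ)

/-!
The eigenvalues `λ` of `ρ^{T_A}` sum to `tr ρ = 1`, and `∑ λ² = tr (ρ^{T_A})² = tr ρ² ≤ 1`.
Since `∑ |λ| = 1 + 2 N(ρ)`, the identity `∑ (|λ| - 1/n)² = ∑ λ² - (2/n) ∑ |λ| + 1` shows that
`N(ρ) = (n - 1)/2` holds exactly when `|λ| = 1/n` for every eigenvalue, i.e. when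
`(ρ^{T_A})² = n⁻² • 1`. In that case `tr ρ² = 1`, so `ρ = |ψ⟩⟨ψ|` is pure, and for a pure state
`(|ψ⟩⟨ψ|^{T_A})² = ρ_Aᵀ ⊗ ρ_B` is the Kronecker product of the reduced matrices, which equals
`n⁻² • 1` exactly when `ρ_A = 1/n`.
-/

theorem Matrix.mul_eq_smul_one_comm {n K : Type*} [Fintype n] [DecidableEq n] [Field K]
    {A B : Matrix n n K} {c : K} (hc : c ≠ 0) : A * B = c • 1 ↔ B * A = c • 1 := by
  rw [← inv_smul_eq_iff₀ hc, ← inv_smul_eq_iff₀ hc, ← smul_mul_assoc, ← mul_smul_comm,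
    mul_eq_one_comm]

namespace Matrix.IsHermitian

variable {𝕜 n : Type*} [RCLike 𝕜] [Fintype n] [DecidableEq n] {A : Matrix n n 𝕜}

theorem mul_self_eq_conjStarAlgAut (hA : A.IsHermitian) :
    A * A = Unitary.conjStarAlgAut 𝕜 _ hA.eigenvectorUnitary
      (diagonal fun i => ((hA.eigenvalues i ^ 2 : ℝ) : 𝕜)) := by
  conv_lhs => rw [hA.spectral_theorem]
  rw [← map_mul, diagonal_mul_diagonal]
  simp [sq]

theorem re_trace_eq_sum_eigenvalues (hA : A.IsHermitian) :
    RCLike.re A.trace = ∑ i, hA.eigenvalues i := by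
  simp [hA.trace_eq_sum_eigenvalues]

theorem re_trace_mul_self (hA : A.IsHermitian) :
    RCLike.re (A * A).trace = ∑ i, hA.eigenvalues i ^ 2 := by
  rw [hA.mul_self_eq_conjStarAlgAut, Unitary.conjStarAlgAut_apply, trace_mul_cycle,
    Unitary.coe_star_mul_self, one_mul, trace_diagonal]
  simp

theorem mul_self_eq_sq_smul_one_iff (hA : A.IsHermitian) {c : ℝ} (hc : 0 ≤ c) :
    A * A = (c : 𝕜) ^ 2 • 1 ↔ ∀ i, |hA.eigenvalues i| = c := by
  have hc1 : (c : 𝕜) ^ 2 • (1 : Matrix n n 𝕜) =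
      Unitary.conjStarAlgAut 𝕜 _ hA.eigenvectorUnitary (diagonal fun _ => ((c ^ 2 : ℝ) : 𝕜)) := by
    simp [← smul_one_eq_diagonal]
  rw [hA.mul_self_eq_conjStarAlgAut, hc1, EquivLike.apply_eq_iff_eq, diagonal_eq_diagonal_iff]
  refine forall_congr' fun i => ?_
  rw [RCLike.ofReal_inj, sq_eq_sq_iff_abs_eq_abs, abs_of_nonneg hc]

theorem eq_vecMulVec_of_eigenvalues_eq_single (hA : A.IsHermitian) {i : n}
    (hi : hA.eigenvalues = Pi.single i 1) :
    A = vecMulVec ⇑(hA.eigenvectorBasis i) (star ⇑(hA.eigenvectorBasis i)) := by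
  conv_lhs => rw [hA.spectral_theorem, Unitary.conjStarAlgAut_apply, hi]
  ext p q
  simp [mul_apply, diagonal_apply, Pi.single_apply, vecMulVec_apply, eigenvectorUnitary_apply]

end Matrix.IsHermitian

theorem exists_eq_single_of_sum_eq_one_of_sum_sq_eq_one {ι : Type*} [Fintype ι]
    [DecidableEq ι] {μ : ι → ℝ} (hμ : ∀ i, 0 ≤ μ i) (hsum : ∑ i, μ i = 1)
    (hsq : ∑ i, μ i ^ 2 = 1) : ∃ i, μ = Pi.single i 1 := by
  have hle : ∀ i, μ i ≤ 1 := fun i =>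
    hsum ▸ Finset.single_le_sum (fun j _ => hμ j) (Finset.mem_univ i)
  have hzero : ∀ i, μ i * (1 - μ i) = 0 := by
    have := (Finset.sum_eq_zero_iff_of_nonneg fun i _ => mul_nonneg (hμ i) (sub_nonneg.2 (hle i))).1
      (by simp only [mul_sub, mul_one, ← sq]; rw [Finset.sum_sub_distrib, hsum, hsq, sub_self])
    exact fun i => this i (Finset.mem_univ i)
  obtain ⟨i, -, hi⟩ := Finset.exists_ne_zero_of_sum_ne_zero (hsum ▸ one_ne_zero)
  have hi1 : μ i = 1 := by linarith [(mul_eq_zero.1 (hzero i)).resolve_left hi]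
  refine ⟨i, funext fun j => ?_⟩
  rcases eq_or_ne j i with rfl | hj
  · simp [hi1]
  · have hpair : μ i + μ j ≤ 1 := by
      rw [← hsum, ← Finset.sum_pair hj.symm]
      exact Finset.sum_le_sum_of_subset_of_nonneg (Finset.subset_univ _) fun k _ _ => hμ k
    simp [hj, le_antisymm (by linarith) (hμ j)]

theorem sum_max_neg_eq_iff_abs_eq {ι : Type*} [Fintype ι] {n : ℕ} {l : ι → ℝ}
    (hcard : Fintype.card ι = n ^ 2) (hsum : ∑ i, l i = 1) (hsq : ∑ i, l i ^ 2 ≤ 1) :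
    ∑ i, max (-l i) 0 = ((n : ℝ) - 1) / 2 ↔ ∀ i, |l i| = (n : ℝ)⁻¹ := by
  have hn : (n : ℝ) ≠ 0 := by
    rw [Nat.cast_ne_zero]
    rintro rfl
    simp [Fintype.card_eq_zero_iff] at hcard
    simp at hsum
  have habs : ∑ i, |l i| = 1 + 2 * ∑ i, max (-l i) 0 := by
    rw [← hsum, Finset.mul_sum, ← Finset.sum_add_distrib]
    refine Finset.sum_congr rfl fun i _ => ?_
    rcases le_total (l i) 0 with h | h
    · rw [abs_of_nonpos h, max_eq_left (neg_nonneg.2 h)]; ring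
    · rw [abs_of_nonneg h, max_eq_right (neg_nonpos.2 h)]; ring
  have hdev : ∑ i, (|l i| - (n : ℝ)⁻¹) ^ 2 = ∑ i, l i ^ 2 - 2 * (n : ℝ)⁻¹ * ∑ i, |l i| + 1 := by
    simp only [sub_sq, sq_abs, Finset.sum_add_distrib, Finset.sum_sub_distrib, ← Finset.mul_sum,
      ← Finset.sum_mul, Finset.sum_const, Finset.card_univ, hcard, nsmul_eq_mul, Nat.cast_pow]
    field_simp
  constructor
  · intro hneg i
    have hzero : ∑ i, (|l i| - (n : ℝ)⁻¹) ^ 2 = 0 := by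
      refine le_antisymm ?_ (Finset.sum_nonneg fun i _ => sq_nonneg _)
      rw [hdev, habs, hneg, show 1 + 2 * (((n : ℝ) - 1) / 2) = n by ring, mul_assoc,
        inv_mul_cancel₀ hn]
      linarith
    have := (Finset.sum_eq_zero_iff_of_nonneg fun i _ => sq_nonneg _).1 hzero i (Finset.mem_univ i)
    exact sub_eq_zero.1 (pow_eq_zero_iff two_ne_zero |>.1 this)
  · intro h
    have : ∑ i, |l i| = n := by
      simp only [h, Finset.sum_const, Finset.card_univ, hcard, nsmul_eq_mul, Nat.cast_pow]
      field_simp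
    rw [this] at habs
    linarith

namespace IsDensityMatrix

variable {k : Type*} [Fintype k] [DecidableEq k] {ρ : Matrix k k ℂ}

theorem sum_eigenvalues (hρ : IsDensityMatrix ρ) : ∑ i, hρ.1.1.eigenvalues i = 1 := by
  rw [← hρ.1.1.re_trace_eq_sum_eigenvalues, hρ.2, RCLike.one_re]

theorem re_trace_mul_self_le_one (hρ : IsDensityMatrix ρ) : RCLike.re (ρ * ρ).trace ≤ 1 := by
  rw [hρ.1.1.re_trace_mul_self]
  calc ∑ i, hρ.1.1.eigenvalues i ^ 2
      ≤ (∑ i, hρ.1.1.eigenvalues i) ^ 2 :=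
        Finset.sum_sq_le_sq_sum_of_nonneg fun i _ => hρ.1.eigenvalues_nonneg i
    _ = 1 := by rw [hρ.sum_eigenvalues, one_pow]

theorem exists_eq_proj (hρ : IsDensityMatrix ρ) (hpure : (ρ * ρ).trace = 1) :
    ∃ ψ : k → ℂ, IsUnitVec ψ ∧ ρ = proj ψ := by
  obtain ⟨i, hi⟩ := exists_eq_single_of_sum_eq_one_of_sum_sq_eq_one
    hρ.1.eigenvalues_nonneg hρ.sum_eigenvalues
    (by rw [← hρ.1.1.re_trace_mul_self, hpure, RCLike.one_re])
  refine ⟨_, ?_, hρ.1.1.eq_vecMulVec_of_eigenvalues_eq_single hi⟩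
  rw [IsUnitVec, ← EuclideanSpace.norm_sq_eq, hρ.1.1.eigenvectorBasis.orthonormal.1 i, one_pow]

end IsDensityMatrix

theorem trace_ptA {m n : ℕ} (ρ : Matrix (Fin m × Fin n) (Fin m × Fin n) ℂ) :
    (ptA ρ).trace = ρ.trace :=
  rfl

theorem trace_ptA_mul_self {m n : ℕ} (ρ : Matrix (Fin m × Fin n) (Fin m × Fin n) ℂ) :
    (ptA ρ * ptA ρ).trace = (ρ * ρ).trace := by
  simp only [trace, diag, mul_apply, ptA, ← Finset.sum_product']
  let e : (Fin m × Fin n) × (Fin m × Fin n) ≃ (Fin m × Fin n) × (Fin m × Fin n) :=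
    { toFun x := ((x.2.1, x.1.2), (x.1.1, x.2.2))
      invFun x := ((x.2.1, x.1.2), (x.1.1, x.2.2))
      left_inv _ := rfl
      right_inv _ := rfl }
  exact e.sum_comp fun x => ρ x.1 x.2 * ρ x.2 x.1

open scoped Kronecker

section PureState

variable {n : ℕ} (ψ : Fin n × Fin n → ℂ)

def reducedB : Matrix (Fin n) (Fin n) ℂ :=
  fun j l => ∑ i, ψ (i, j) * (starRingEnd ℂ) (ψ (i, l))

theorem reducedA_eq_mul_conjTranspose :
    reducedA ψ = of (Function.curry ψ) * (of (Function.curry ψ))ᴴ :=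
  rfl

theorem reducedB_eq_transpose_conjTranspose_mul :
    reducedB ψ = ((of (Function.curry ψ))ᴴ * of (Function.curry ψ))ᵀ := by
  rw [transpose_mul]
  rfl

theorem ptA_proj_mul_self : ptA (proj ψ) * ptA (proj ψ) = (reducedA ψ)ᵀ ⊗ₖ reducedB ψ := by
  ext ⟨i, j⟩ ⟨k, l⟩
  simp only [proj, mul_apply, ptA, vecMulVec_apply, Pi.star_apply, RCLike.star_def,
    Fintype.sum_prod_type, kroneckerMap_apply, transpose_apply, reducedA, reducedB,
    Finset.sum_mul_sum]
  rw [Finset.sum_comm]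
  exact Finset.sum_congr rfl fun _ _ => Finset.sum_congr rfl fun _ _ => by ring

variable {ψ}

theorem reducedB_eq_of_maxEntangled (hψ : MaxEntangled ψ) : reducedB ψ = (n : ℂ)⁻¹ • 1 := by
  rcases eq_or_ne n 0 with rfl | hn
  · exact Subsingleton.elim _ _
  rw [MaxEntangled, reducedA_eq_mul_conjTranspose,
    mul_eq_smul_one_comm (inv_ne_zero (Nat.cast_ne_zero.2 hn))] at hψ
  rw [reducedB_eq_transpose_conjTranspose_mul, hψ, transpose_smul, transpose_one]

theorem ptA_proj_mul_self_of_maxEntangled (hψ : MaxEntangled ψ) :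
    ptA (proj ψ) * ptA (proj ψ) = (n : ℂ)⁻¹ ^ 2 • 1 := by
  rw [ptA_proj_mul_self, reducedB_eq_of_maxEntangled hψ, show reducedA ψ = _ from hψ,
    transpose_smul, transpose_one, smul_kronecker, kronecker_smul, one_kronecker_one, smul_smul,
    sq]

theorem IsUnitVec.trace_reducedB (hψ : IsUnitVec ψ) : (reducedB ψ).trace = 1 := by
  simp only [trace, diag, reducedB, Complex.mul_conj, Complex.normSq_eq_norm_sq]
  rw [Finset.sum_comm, ← Fintype.sum_prod_type']
  exact_mod_cast hψ

theorem maxEntangled_of_ptA_proj_mul_self (hψ : IsUnitVec ψ)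
    (h : ptA (proj ψ) * ptA (proj ψ) = (n : ℂ)⁻¹ ^ 2 • 1) : MaxEntangled ψ := by
  rw [ptA_proj_mul_self] at h
  have hblock : ∀ i k j, reducedA ψ i k * reducedB ψ j j =
      (n : ℂ)⁻¹ ^ 2 * (1 : Matrix (Fin n) (Fin n) ℂ) i k := by
    intro i k j
    simpa [one_apply, eq_comm] using congrFun (congrFun h (k, j)) (i, j)
  ext i k
  calc reducedA ψ i k = reducedA ψ i k * (reducedB ψ).trace := by rw [hψ.trace_reducedB, mul_one]
    _ = ∑ _j : Fin n, (n : ℂ)⁻¹ ^ 2 * (1 : Matrix (Fin n) (Fin n) ℂ) i k := by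
      rw [trace, Finset.mul_sum]
      exact Finset.sum_congr rfl fun j _ => hblock i k j
    _ = ((n : ℂ)⁻¹ • (1 : Matrix (Fin n) (Fin n) ℂ)) i k := by
      rw [Finset.sum_const, Finset.card_univ, Fintype.card_fin, nsmul_eq_mul, ← mul_assoc,
        inv_pow, ← div_eq_mul_inv, sq, div_self_mul_self', Matrix.smul_apply, smul_eq_mul]

end PureState

theorem IsDensityMatrix.ptA_mul_self_eq_iff {n : ℕ}
    {ρ : Matrix (Fin n × Fin n) (Fin n × Fin n) ℂ} (hρ : IsDensityMatrix ρ) :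
    ptA ρ * ptA ρ = (n : ℂ)⁻¹ ^ 2 • 1 ↔
      ∃ ψ : Fin n × Fin n → ℂ, IsUnitVec ψ ∧ MaxEntangled ψ ∧ ρ = proj ψ := by
  constructor
  · intro hsq
    have hn : (n : ℂ) ≠ 0 := by
      rintro hn
      obtain rfl := Nat.cast_eq_zero.1 hn
      simpa [trace] using hρ.2
    have hpure : (ρ * ρ).trace = 1 := by
      rw [← trace_ptA_mul_self, hsq, trace_smul, trace_one, Fintype.card_prod, Fintype.card_fin,
        smul_eq_mul]
      push_cast
      field_simp
    obtain ⟨ψ, hψ, rfl⟩ := hρ.exists_eq_proj hpure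
    exact ⟨ψ, hψ, maxEntangled_of_ptA_proj_mul_self hψ hsq, rfl⟩
  · rintro ⟨ψ, -, hψ, rfl⟩
    exact ptA_proj_mul_self_of_maxEntangled hψ

def negativity {k : Type*} [Fintype k] [DecidableEq k] {A : Matrix k k ℂ} (hA : A.IsHermitian) :
    ℝ :=
  ∑ i, max (-hA.eigenvalues i) 0

theorem negativity_ptA_eq_iff {n : ℕ} (ρ : Matrix (Fin n × Fin n) (Fin n × Fin n) ℂ)
    (hρ : IsDensityMatrix ρ) (h : (ptA ρ).IsHermitian) :
    negativity h = ((n : ℝ) - 1) / 2 ↔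
      ∃ ψ : Fin n × Fin n → ℂ, IsUnitVec ψ ∧ MaxEntangled ψ ∧ ρ = proj ψ := by
  have hsum : ∑ i, h.eigenvalues i = 1 := by
    rw [← h.re_trace_eq_sum_eigenvalues, trace_ptA, hρ.2, RCLike.one_re]
  have hsq : ∑ i, h.eigenvalues i ^ 2 ≤ 1 := by
    rw [← h.re_trace_mul_self, trace_ptA_mul_self]
    exact hρ.re_trace_mul_self_le_one
  rw [negativity, sum_max_neg_eq_iff_abs_eq (by simp [sq]) hsum hsq,
    ← h.mul_self_eq_sq_smul_one_iff (by positivity), ← hρ.ptA_mul_self_eq_iff]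
  push_cast
  rfl

theorem stmt14 (ρ : Matrix (Fin 2 × Fin 2) (Fin 2 × Fin 2) ℂ) (hρ : IsDensityMatrix ρ)
    (h : (ptA ρ).IsHermitian) :
    (∑ i, max (-(h.eigenvalues i)) 0) = 1/2 ↔
      ∃ ψ : Fin 2 × Fin 2 → ℂ, IsUnitVec ψ ∧ MaxEntangled ψ ∧ ρ = proj ψ := by
  rw [show (1 / 2 : ℝ) = (((2 : ℕ) : ℝ) - 1) / 2 by norm_num]
  exact negativity_ptA_eq_iff ρ hρ h
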